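/- arXiv:1801.04205 — 2 statements merged into one kernel-verified Lean document; each statement's English description precedes it below -/
import Mathlib

section
/- Let L ≥ 1 and let w_ℓ = cos(π(ℓ - 1/2)/L) for ℓ = 1,...,L be the zeros of the Chebyshev polynomial T_L. Then for any algebraic polynomial p of degree at most d with d < L, one has max_{x∈[-1,1]} |p(x)| ≤ cos(πd/(2L))^{-1} · max_{1≤ℓ≤L} |p(w_ℓ)|. -/
open Real

section ChebAux
open Polynomial Complex

noncomputable def Phat (d : ℕ) (p : Polynomial ℝ) : Polynomial ℂ :=
  p.sum fun j c => Polynomial.C ((c:ℂ) / 2^j) * ((Polynomial.X^2+1)^j * Polynomial.X^(d-j))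

lemma Phat_eval (d : ℕ) (p : Polynomial ℝ) (hp : p.natDegree ≤ d) (θ : ℝ) :
    (Phat d p).eval (Complex.exp (θ*Complex.I))
      = Complex.exp ((d:ℂ)*θ*Complex.I) * ((p.eval (Real.cos θ) : ℝ) : ℂ) := by
  have hcos : (Complex.exp (θ*Complex.I))^2 + 1
      = Complex.exp (θ*Complex.I) * (2 * ((Real.cos θ : ℝ) : ℂ)) := by
    have key : Complex.exp (↑θ*Complex.I) * Complex.exp (-↑θ*Complex.I) = 1 := by
      rw [← Complex.exp_add]
      have : (↑θ*Complex.I + -↑θ*Complex.I) = 0 := by ring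
      rw [this, Complex.exp_zero]
    rw [Complex.ofReal_cos, Complex.cos]
    have : Complex.exp (↑θ*Complex.I) * (2 * ((Complex.exp (↑θ*Complex.I) + Complex.exp (-↑θ*Complex.I)) / 2))
        = Complex.exp (↑θ*Complex.I) * Complex.exp (↑θ*Complex.I)
          + Complex.exp (↑θ*Complex.I) * Complex.exp (-↑θ*Complex.I) := by ring
    rw [this, key, sq]
  have hev : p.eval (Real.cos θ) = p.sum fun n a => a * (Real.cos θ)^n := Polynomial.eval_eq_sum
  rw [Phat, Polynomial.sum_def, Polynomial.eval_finset_sum, hev, Polynomial.sum_def]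
  push_cast [Finset.mul_sum]
  refine Finset.sum_congr rfl fun j hj => ?_
  have hjd : j ≤ d := le_trans (Polynomial.le_natDegree_of_ne_zero (Polynomial.mem_support_iff.mp hj)) hp
  simp only [Polynomial.eval_mul, Polynomial.eval_C, Polynomial.eval_pow, Polynomial.eval_add,
    Polynomial.eval_one, Polynomial.eval_X]
  rw [hcos]
  rw [mul_pow, ← Complex.exp_nat_mul]
  have h2 : ((2:ℂ) * (Real.cos θ:ℂ))^j = 2^j * (Real.cos θ:ℂ)^j := by rw [mul_pow]
  rw [h2]
  have hsplit : Complex.exp ((d:ℂ)*θ*Complex.I)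
      = Complex.exp ((j:ℂ)*(θ*Complex.I)) * Complex.exp (((d-j:ℕ):ℂ)*(θ*Complex.I)) := by
    rw [← Complex.exp_add]
    congr 1
    have : ((d-j:ℕ):ℂ) = (d:ℂ) - (j:ℂ) := by
      push_cast [Nat.cast_sub hjd]; ring
    rw [this]; ring
  rw [← Complex.exp_nat_mul, hsplit]
  field_simp
  push_cast; ring

noncomputable def Fpoly (d : ℕ) (p : Polynomial ℝ) (M θb : ℝ) : Polynomial ℂ :=
  Polynomial.C (((M:ℂ)/2) * Complex.exp (-((d:ℂ)*θb*Complex.I))) * Polynomial.X^(2*d)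
  + Polynomial.C (((M:ℂ)/2) * Complex.exp ((d:ℂ)*θb*Complex.I)) - Phat d p

lemma Phat_natDegree (d : ℕ) (p : Polynomial ℝ) (hp : p.natDegree ≤ d) :
    (Phat d p).natDegree ≤ 2*d := by
  rw [Phat, Polynomial.sum_def]
  apply Polynomial.natDegree_sum_le_of_forall_le
  intro j hj
  have hjd : j ≤ d := le_trans (Polynomial.le_natDegree_of_ne_zero (Polynomial.mem_support_iff.mp hj)) hp
  have h1 : ((Polynomial.X^2+1 : Polynomial ℂ)).natDegree ≤ 2 := by
    apply le_trans (Polynomial.natDegree_add_le _ _)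
    simp [Polynomial.natDegree_X_pow]
  have h2 : ((Polynomial.X^2+1 : Polynomial ℂ)^j).natDegree ≤ j * 2 :=
    le_trans Polynomial.natDegree_pow_le (by gcongr)
  have h3 : ((Polynomial.X : Polynomial ℂ)^(d-j)).natDegree ≤ d - j := by
    simp [Polynomial.natDegree_X_pow]
  apply le_trans Polynomial.natDegree_mul_le
  rw [Polynomial.natDegree_C]
  apply le_trans (Nat.zero_add _).le
  apply le_trans Polynomial.natDegree_mul_le
  omega

lemma Fpoly_natDegree (d : ℕ) (p : Polynomial ℝ) (hp : p.natDegree ≤ d) (M θb : ℝ) :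
    (Fpoly d p M θb).natDegree ≤ 2*d := by
  rw [Fpoly]
  apply le_trans (Polynomial.natDegree_sub_le _ _)
  apply max_le _ (Phat_natDegree d p hp)
  apply le_trans (Polynomial.natDegree_add_le _ _)
  apply max_le
  · apply le_trans Polynomial.natDegree_mul_le
    rw [Polynomial.natDegree_C, Polynomial.natDegree_X_pow]
    omega
  · rw [Polynomial.natDegree_C]
    exact Nat.zero_le _

lemma double_dvd (F : Polynomial ℂ) (a : ℂ) (h0 : F.eval a = 0) (h1 : F.derivative.eval a = 0) :
    (Polynomial.X - Polynomial.C a)^2 ∣ F := by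
  obtain ⟨Q, rfl⟩ := (Polynomial.dvd_iff_isRoot.mpr h0)
  have hd : ((Polynomial.X - Polynomial.C a) * Q).derivative
      = Q + (Polynomial.X - Polynomial.C a) * Q.derivative := by
    simp [Polynomial.derivative_mul]
  rw [hd] at h1
  simp at h1
  obtain ⟨R, rfl⟩ := (Polynomial.dvd_iff_isRoot.mpr h1)
  exact ⟨R, by ring⟩

lemma Fpoly_eval (d : ℕ) (p : Polynomial ℝ) (hp : p.natDegree ≤ d) (M θb θ : ℝ) :
    (Fpoly d p M θb).eval (Complex.exp (θ*Complex.I))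
      = Complex.exp ((d:ℂ)*θ*Complex.I)
        * ((M * Real.cos ((d:ℝ)*(θ-θb)) - p.eval (Real.cos θ) : ℝ) : ℂ) := by
  have hA : Complex.exp ((d:ℂ)*θ*Complex.I) ≠ 0 := Complex.exp_ne_zero _
  have hB : Complex.exp ((d:ℂ)*θb*Complex.I) ≠ 0 := Complex.exp_ne_zero _
  have e1 : (Complex.exp (θ*Complex.I))^(2*d) = (Complex.exp ((d:ℂ)*θ*Complex.I))^2 := by
    rw [← Complex.exp_nat_mul, ← Complex.exp_nat_mul]
    congr 1
    push_cast
    ring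
  have e2 : Complex.exp (-((d:ℂ)*θb*Complex.I)) = (Complex.exp ((d:ℂ)*θb*Complex.I))⁻¹ :=
    Complex.exp_neg _
  have e3 : Complex.cos ((d:ℂ)*((θ:ℂ)-(θb:ℂ)))
      = (Complex.exp ((d:ℂ)*θ*Complex.I) * (Complex.exp ((d:ℂ)*θb*Complex.I))⁻¹
        + Complex.exp ((d:ℂ)*θb*Complex.I) * (Complex.exp ((d:ℂ)*θ*Complex.I))⁻¹)/2 := by
    rw [Complex.cos]
    congr 2
    · rw [← Complex.exp_neg, ← Complex.exp_add]; congr 1; ring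
    · rw [← Complex.exp_neg, ← Complex.exp_add]; congr 1; ring
  simp only [Fpoly, Polynomial.eval_sub, Polynomial.eval_add, Polynomial.eval_mul,
    Polynomial.eval_C, Polynomial.eval_pow, Polynomial.eval_X, Phat_eval d p hp θ]
  rw [e1, e2]
  push_cast
  rw [e3]
  field_simp

lemma u_hasDeriv (d : ℕ) (p : Polynomial ℝ) (M θb θ : ℝ) :
    HasDerivAt (fun θ : ℝ => M * Real.cos ((d:ℝ)*(θ-θb)) - p.eval (Real.cos θ))
      (M * (-Real.sin ((d:ℝ)*(θ-θb)) * (d:ℝ)) - p.derivative.eval (Real.cos θ) * (-Real.sin θ)) θ := by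
  have h1 : HasDerivAt (fun θ : ℝ => (d:ℝ)*(θ-θb)) (d:ℝ) θ := by
    simpa using ((hasDerivAt_id θ).sub_const θb).const_mul (d:ℝ)
  have h2 := (h1.cos).const_mul M
  have h3 : HasDerivAt (fun θ : ℝ => p.eval (Real.cos θ))
      (p.derivative.eval (Real.cos θ) * (-Real.sin θ)) θ :=
    HasDerivAt.comp θ (Polynomial.hasDerivAt p _) (Real.hasDerivAt_cos θ)
  exact h2.sub h3

lemma root_double (d : ℕ) (p : Polynomial ℝ) (hp : p.natDegree ≤ d) (M θb θ0 : ℝ)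
    (h0 : M * Real.cos ((d:ℝ)*(θ0-θb)) - p.eval (Real.cos θ0) = 0)
    (h1 : HasDerivAt (fun θ : ℝ => M * Real.cos ((d:ℝ)*(θ-θb)) - p.eval (Real.cos θ)) 0 θ0) :
    (Fpoly d p M θb).eval (Complex.exp (θ0*Complex.I)) = 0 ∧
      (Fpoly d p M θb).derivative.eval (Complex.exp (θ0*Complex.I)) = 0 := by
  have hev : (Fpoly d p M θb).eval (Complex.exp (θ0*Complex.I)) = 0 := by
    rw [Fpoly_eval d p hp, h0]; simp
  refine ⟨hev, ?_⟩
  -- g1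
  have hg1 : HasDerivAt (fun θ : ℝ => (Fpoly d p M θb).eval (Complex.exp (θ * Complex.I)))
      ((Fpoly d p M θb).derivative.eval (Complex.exp (θ0 * Complex.I))
        * (Complex.exp (θ0 * Complex.I) * Complex.I)) θ0 := by
    have ha : HasDerivAt (fun θ : ℝ => (θ : ℂ) * Complex.I) Complex.I θ0 := by
      simpa using (HasDerivAt.ofReal_comp (hasDerivAt_id θ0)).mul_const Complex.I
    have hb : HasDerivAt (fun θ : ℝ => Complex.exp ((θ : ℂ) * Complex.I))
        (Complex.exp ((θ0 : ℂ) * Complex.I) * Complex.I) θ0 := by simpa using ha.cexp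
    exact (Polynomial.hasDerivAt _ _).comp θ0 hb
  -- g2
  have hg2 : HasDerivAt (fun θ : ℝ => (Fpoly d p M θb).eval (Complex.exp (θ * Complex.I)))
      (0 : ℂ) θ0 := by
    have heq : (fun θ : ℝ => (Fpoly d p M θb).eval (Complex.exp (θ * Complex.I)))
        = fun θ : ℝ => Complex.exp ((d:ℂ)*θ*Complex.I)
          * ((M * Real.cos ((d:ℝ)*(θ-θb)) - p.eval (Real.cos θ) : ℝ) : ℂ) := by
      funext θ; exact Fpoly_eval d p hp M θb θ
    rw [heq]
    have hc : HasDerivAt (fun θ : ℝ => (d:ℂ) * θ * Complex.I) ((d:ℂ) * Complex.I) θ0 := by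
      have := (HasDerivAt.ofReal_comp (hasDerivAt_id θ0)).const_mul (d:ℂ)
      simpa using this.mul_const Complex.I
    have := (hc.cexp).mul (HasDerivAt.ofReal_comp h1)
    simpa [h0, Pi.mul_def] using this
  have huniq := hg1.unique hg2
  have hne : Complex.exp (θ0 * Complex.I) * Complex.I ≠ 0 := by
    simp [Complex.exp_ne_zero, Complex.I_ne_zero]
  exact (mul_eq_zero.mp huniq).resolve_right hne

lemma ivt_zero {f : ℝ → ℝ} (hf : Continuous f) {a b : ℝ} (hab : a ≤ b) (hs : f a * f b ≤ 0) :
    ∃ z ∈ Set.Icc a b, f z = 0 := by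
  rcases mul_nonpos_iff.mp hs with ⟨h1, h2⟩ | ⟨h1, h2⟩
  · obtain ⟨z, hz, hz0⟩ := intermediate_value_Icc' hab hf.continuousOn ⟨h2, h1⟩
    exact ⟨z, hz, hz0⟩
  · obtain ⟨z, hz, hz0⟩ := intermediate_value_Icc hab hf.continuousOn ⟨h1, h2⟩
    exact ⟨z, hz, hz0⟩

set_option maxHeartbeats 1200000 in
lemma core_nonneg (d : ℕ) (hd : 1 ≤ d) (p : Polynomial ℝ) (hp : p.natDegree ≤ d)
    (M θb δ : ℝ) (hmaxv : p.eval (Real.cos θb) = M)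
    (hub : ∀ θ : ℝ, |p.eval (Real.cos θ)| ≤ M)
    (hδ0 : 0 ≤ δ) (hδle : δ ≤ π / (2*(d:ℝ))) :
    M * Real.cos ((d:ℝ) * δ) ≤ p.eval (Real.cos (θb + δ)) := by
  by_contra hcon
  push_neg at hcon
  have hdpos : (0:ℝ) < d := by exact_mod_cast hd
  have hπ : (0:ℝ) < π := Real.pi_pos
  set u : ℝ → ℝ := fun θ => M * Real.cos ((d:ℝ)*(θ-θb)) - p.eval (Real.cos θ) with hu
  have hu0 : u θb = 0 := by simp [hu, hmaxv]
  have huδ : 0 < u (θb + δ) := by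
    have : θb + δ - θb = δ := by ring
    simp only [hu, this]
    linarith
  have hδpos : 0 < δ := by
    rcases eq_or_lt_of_le hδ0 with h | h
    · exfalso; rw [← h] at huδ; simp only [add_zero] at huδ; rw [hu0] at huδ; exact lt_irrefl _ huδ
    · exact h
  have hδlt : δ < π / d := by
    have : π / (2*(d:ℝ)) < π / d := by
      apply div_lt_div_of_pos_left hπ hdpos
      linarith
    linarith
  -- global bounds on t
  have htle : ∀ θ : ℝ, p.eval (Real.cos θ) ≤ M := fun θ => (abs_le.mp (hub θ)).2
  have htge : ∀ θ : ℝ, -M ≤ p.eval (Real.cos θ) := fun θ => (abs_le.mp (hub θ)).1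
  -- grid points
  set a : ℕ → ℝ := fun j => θb + j*(π/d) with ha
  set c : ℕ → ℝ := fun i => if i = 0 then θb + δ else a i with hc
  have ha_mono : ∀ {i j : ℕ}, i < j → a i < a j := by
    intro i j hij
    simp only [ha]
    have : (i:ℝ) < j := by exact_mod_cast hij
    have hπd : 0 < π/d := div_pos hπ hdpos
    nlinarith
  have hc_lt : ∀ {i j : ℕ}, i < j → c i < c j := by
    intro i j hij
    rcases Nat.eq_zero_or_pos i with rfl | hi
    · have hj : j ≠ 0 := by omega
      simp only [hc, if_pos rfl, if_neg hj, ha]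
      have h1 : (1:ℝ) ≤ j := by exact_mod_cast Nat.one_le_iff_ne_zero.mpr hj
      have hπd : 0 < π/d := div_pos hπ hdpos
      nlinarith
    · have hi' : i ≠ 0 := by omega
      have hj : j ≠ 0 := by omega
      simp only [hc, if_neg hi', if_neg hj]
      exact ha_mono hij
  have hcθb : ∀ i : ℕ, θb < c i := by
    intro i
    rcases Nat.eq_zero_or_pos i with rfl | hi
    · simp only [hc, if_pos rfl]; linarith
    · have hi' : i ≠ 0 := by omega
      simp only [hc, if_neg hi', ha]
      have h1 : (1:ℝ) ≤ i := by exact_mod_cast hi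
      have hπd : 0 < π/d := div_pos hπ hdpos
      nlinarith
  -- u at grid points
  have hua : ∀ j : ℕ, u (a j) = M*(-1:ℝ)^j - p.eval (Real.cos (a j)) := by
    intro j
    have h1 : (d:ℝ)*(a j - θb) = j * π := by
      simp only [ha]
      field_simp
      ring
    have h2 : Real.cos ((j:ℕ) * π) = (-1:ℝ)^j := by
      simpa using Real.cos_nat_mul_pi_sub 0 j
    simp only [hu, h1, h2]
  have hs_even : ∀ j : ℕ, Even j → 0 ≤ u (a j) := by
    intro j hj
    rw [hua j, hj.neg_one_pow]
    have := htle (a j); linarith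
  have hs_odd : ∀ j : ℕ, Odd j → u (a j) ≤ 0 := by
    intro j hj
    rw [hua j, hj.neg_one_pow]
    have := htge (a j); linarith
  -- continuity of u
  have hucont : Continuous u := by
    apply Continuous.sub
    · exact continuous_const.mul (Real.continuous_cos.comp (by continuity))
    · exact p.continuous.comp Real.continuous_cos
  -- IVT zeros
  have hzex : ∀ i : ℕ, ∃ z, i < 2*d-1 → z ∈ Set.Icc (c i) (c (i+1)) ∧ u z = 0 := by
    intro i
    by_cases hi : i < 2*d-1
    · have hsign : u (c i) * u (c (i+1)) ≤ 0 := by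
        rcases Nat.eq_zero_or_pos i with rfl | hipos
        · have h1 : c 1 = a 1 := by simp [hc]
          have h2 : u (c 1) ≤ 0 := by rw [h1]; exact hs_odd 1 (by norm_num)
          have h3 : 0 < u (c 0) := by simpa [hc] using huδ
          exact mul_nonpos_iff.mpr (Or.inl ⟨le_of_lt h3, h2⟩)
        · have hi' : i ≠ 0 := by omega
          have h1 : c i = a i := by simp [hc, hi']
          have h2 : c (i+1) = a (i+1) := by simp [hc]
          rcases Nat.even_or_odd i with he | ho
          · have := hs_even i he
            have := hs_odd (i+1) (Even.add_one he)
            rw [h1, h2]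
            exact mul_nonpos_iff.mpr (Or.inl ⟨‹0 ≤ u (a i)›, ‹u (a (i+1)) ≤ 0›⟩)
          · have := hs_odd i ho
            have := hs_even (i+1) (Odd.add_one ho)
            rw [h1, h2]
            exact mul_nonpos_iff.mpr (Or.inr ⟨‹u (a i) ≤ 0›, ‹0 ≤ u (a (i+1))›⟩)
      obtain ⟨z, hz1, hz2⟩ := ivt_zero hucont (le_of_lt (hc_lt (Nat.lt_succ_self i))) hsign
      exact ⟨z, fun _ => ⟨hz1, hz2⟩⟩
    · exact ⟨0, fun h => absurd h hi⟩
  choose z hzspec using hzex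
  -- complex polynomial
  set F : Polynomial ℂ := Fpoly d p M θb with hF
  have E : ∀ θ : ℝ, F.eval (Complex.exp (θ*Complex.I))
      = Complex.exp ((d:ℂ)*θ*Complex.I) * ((u θ : ℝ) : ℂ) :=
    fun θ => Fpoly_eval d p hp M θb θ
  have hFne : F ≠ 0 := by
    intro h0
    have h1 := E (θb + δ)
    rw [h0] at h1
    simp only [Polynomial.eval_zero] at h1
    have h2 : ((u (θb+δ) : ℝ) : ℂ) = 0 := by
      rcases mul_eq_zero.mp h1.symm with h | h
      · exact absurd h (Complex.exp_ne_zero _)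
      · exact h
    have : u (θb+δ) = 0 := by exact_mod_cast h2
    linarith
  -- injectivity of exp on [θb, θb+2π)
  have hinj : ∀ x y : ℝ, θb ≤ x → x < θb + 2*π → θb ≤ y → y < θb + 2*π →
      Complex.exp (x*Complex.I) = Complex.exp (y*Complex.I) → x = y := by
    intro x y hx1 hx2 hy1 hy2 hxy
    obtain ⟨n, hn⟩ := Complex.exp_eq_exp_iff_exists_int.mp hxy
    have h2 : ((x:ℂ)) * Complex.I = ((y:ℝ) + (n:ℝ) * (2*π) : ℝ) * Complex.I := by
      rw [hn]; push_cast; ring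
    have h3 : ((x:ℂ)) = (((y:ℝ) + (n:ℝ) * (2*π) : ℝ) : ℂ) :=
      mul_right_cancel₀ Complex.I_ne_zero h2
    have hr : x = y + (n:ℝ) * (2*π) := by exact_mod_cast h3
    have hn0 : n = 0 := by
      by_contra h
      have h1 : (1:ℝ) ≤ |(n:ℝ)| := by
        have := Int.one_le_abs h
        calc (1:ℝ) ≤ (|n| : ℤ) := by exact_mod_cast this
          _ = |(n:ℝ)| := by push_cast; ring
      have habs : |(n:ℝ)| * (2*π) = |x - y| := by
        rw [← abs_of_pos (show (0:ℝ) < 2*π by linarith)]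
        rw [← abs_mul]
        congr 1
        linarith
      have hlt : |x - y| < 2*π := abs_sub_lt_iff.mpr ⟨by linarith, by linarith⟩
      nlinarith
    rw [hn0] at hr
    simpa using hr
  -- grid identities
  have hdaj : ∀ j : ℕ, (d:ℝ)*(a j - θb) = j * π := by
    intro j
    simp only [ha]
    field_simp
    ring
  have hc_le : ∀ {i j : ℕ}, i ≤ j → c i ≤ c j := by
    intro i j hij
    rcases eq_or_lt_of_le hij with rfl | h
    · exact le_rfl
    · exact le_of_lt (hc_lt h)
  have hcub : ∀ i : ℕ, i ≤ 2*d-1 → c i < θb + 2*π := by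
    intro i hi
    have h1 : c i ≤ c (2*d-1) := hc_le hi
    have h2 : c (2*d-1) = a (2*d-1) := by
      have : (2*d-1 : ℕ) ≠ 0 := by omega
      simp [hc, this]
    have h3 : a (2*d-1) < θb + 2*π := by
      simp only [ha]
      have hcast : ((2*d-1 : ℕ):ℝ) = 2*(d:ℝ) - 1 := by
        push_cast [Nat.cast_sub (by omega : 1 ≤ 2*d)]
        ring
      rw [hcast]
      have hπd : 0 < π/d := div_pos hπ hdpos
      have : (2*(d:ℝ) - 1) * (π/d) = 2*π - π/d := by field_simp
      rw [this]
      linarith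
    linarith [h1, h2 ▸ h3]
  have hzm : ∀ i : ℕ, i < 2*d-1 → θb < z i ∧ z i < θb + 2*π ∧ u (z i) = 0 := by
    intro i hi
    obtain ⟨⟨hl, hr⟩, hz0⟩ := hzspec i hi
    refine ⟨lt_of_lt_of_le (hcθb i) hl, ?_, hz0⟩
    exact lt_of_le_of_lt hr (hcub (i+1) (by omega))
  -- roots
  have hz_root : ∀ i : ℕ, i < 2*d-1 → F.eval (Complex.exp (z i*Complex.I)) = 0 := by
    intro i hi
    rw [E (z i), (hzm i hi).2.2]
    simp
  -- critical points of t
  have htcrit : ∀ θ0 : ℝ, (p.eval (Real.cos θ0) = M ∨ p.eval (Real.cos θ0) = -M) →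
      p.derivative.eval (Real.cos θ0) * (-Real.sin θ0) = 0 := by
    intro θ0 hcase
    have ht' : HasDerivAt (fun θ : ℝ => p.eval (Real.cos θ))
        (p.derivative.eval (Real.cos θ0) * (-Real.sin θ0)) θ0 :=
      HasDerivAt.comp θ0 (Polynomial.hasDerivAt p _) (Real.hasDerivAt_cos θ0)
    rcases hcase with h | h
    · have hmax : IsMaxOn (fun θ : ℝ => p.eval (Real.cos θ)) Set.univ θ0 :=
        isMaxOn_iff.mpr (fun θ _ => by rw [h]; exact htle θ)
      exact (hmax.isLocalMax Filter.univ_mem).hasDerivAt_eq_zero ht'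
    · have hmin : IsMinOn (fun θ : ℝ => p.eval (Real.cos θ)) Set.univ θ0 :=
        isMinOn_iff.mpr (fun θ _ => by rw [h]; exact htge θ)
      exact (hmin.isLocalMin Filter.univ_mem).hasDerivAt_eq_zero ht'
  -- double roots
  have hdouble : ∀ θ0 : ℝ, u θ0 = 0 → Real.sin ((d:ℝ)*(θ0 - θb)) = 0 →
      (p.eval (Real.cos θ0) = M ∨ p.eval (Real.cos θ0) = -M) →
      2 ≤ Polynomial.rootMultiplicity (Complex.exp (θ0*Complex.I)) F := by
    intro θ0 h0 hsin hpm
    have hder : HasDerivAt u 0 θ0 := by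
      have h := u_hasDeriv d p M θb θ0
      have h2 := htcrit θ0 hpm
      rw [hsin, h2] at h
      simpa using h
    have hd2 := root_double d p hp M θb θ0 h0 hder
    exact (Polynomial.le_rootMultiplicity_iff hFne).mpr (double_dvd F _ hd2.1 hd2.2)
  -- the multiset of roots
  classical
  set V : Multiset ℂ := 2 • {Complex.exp (θb*Complex.I)}
    + ∑ i ∈ Finset.range (2*d-1), ({Complex.exp (z i*Complex.I)} : Multiset ℂ) with hV
  have hcardsum : ∀ (s : Finset ℕ) (f : ℕ → Multiset ℂ),
      Multiset.card (∑ i ∈ s, f i) = ∑ i ∈ s, Multiset.card (f i) := by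
    intro s f
    induction s using Finset.induction with
    | empty => simp
    | insert _ _ h ih => simp [Finset.sum_insert h, ih]
  have hVcard : Multiset.card V = 2*d+1 := by
    rw [hV, Multiset.card_add, Multiset.card_nsmul, hcardsum]
    simp only [Multiset.card_singleton]
    simp
    omega
  have hVle : V ≤ F.roots := by
    rw [Multiset.le_iff_count]
    intro ζ
    rw [Polynomial.count_roots]
    rw [hV, Multiset.count_add, Multiset.count_nsmul, Multiset.count_singleton,
      Multiset.count_sum']
    simp only [Multiset.count_singleton]
    rw [← Finset.card_filter]
    set S := (Finset.range (2*d-1)).filter (fun i => ζ = Complex.exp (z i*Complex.I)) with hS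
    by_cases hζ : ζ = Complex.exp (θb*Complex.I)
    · have hSempty : S = ∅ := by
        rw [Finset.eq_empty_iff_forall_notMem]
        intro i hi
        obtain ⟨hir, hie⟩ := Finset.mem_filter.mp hi
        have hi' := Finset.mem_range.mp hir
        obtain ⟨hz1, hz2, _⟩ := hzm i hi'
        have hzeq : z i = θb := hinj (z i) θb (le_of_lt hz1) hz2 le_rfl (by linarith)
          (by rw [← hie, hζ])
        linarith
      rw [if_pos hζ, hSempty]
      simp only [Finset.card_empty, mul_one, add_zero]
      rw [hζ]
      exact hdouble θb hu0 (by simp) (Or.inl hmaxv)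
    · rw [if_neg hζ]
      simp only [mul_zero, zero_add]
      rcases Finset.eq_empty_or_nonempty S with hSe | hSne
      · rw [hSe]; simp
      · have hi0S : S.min' hSne ∈ S := S.min'_mem hSne
        set i0 := S.min' hSne with hi0def
        obtain ⟨hi0r, hi0e⟩ := Finset.mem_filter.mp hi0S
        have hi0lt := Finset.mem_range.mp hi0r
        obtain ⟨hz01, hz02, hz03⟩ := hzm i0 hi0lt
        have hroot1 : F.IsRoot ζ := by
          rw [Polynomial.IsRoot, hi0e]
          exact hz_root i0 hi0lt
        have h1le : 1 ≤ Polynomial.rootMultiplicity ζ F :=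
          (Polynomial.rootMultiplicity_pos hFne).mpr hroot1
        by_cases hone : ∀ i ∈ S, i = i0
        · have hsub1 : S ⊆ {i0} := fun i hi => Finset.mem_singleton.mpr (hone i hi)
          calc S.card ≤ 1 := by simpa using Finset.card_le_card hsub1
            _ ≤ _ := h1le
        · push_neg at hone
          obtain ⟨i1, hi1S, hi1ne⟩ := hone
          obtain ⟨hi1r, hi1e⟩ := Finset.mem_filter.mp hi1S
          have hi1lt := Finset.mem_range.mp hi1r
          obtain ⟨hz11, hz12, hz13⟩ := hzm i1 hi1lt
          have hi0i1 : i0 < i1 := lt_of_le_of_ne (S.min'_le i1 hi1S) (Ne.symm hi1ne)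
          have hzz : z i1 = z i0 := hinj _ _ (le_of_lt hz11) hz12 (le_of_lt hz01) hz02
            (by rw [← hi1e, hi0e])
          obtain ⟨⟨hl0, hr0⟩, _⟩ := hzspec i0 hi0lt
          obtain ⟨⟨hl1, hr1⟩, _⟩ := hzspec i1 hi1lt
          have hcc : c (i0+1) ≤ c i1 := hc_le (by omega)
          have heq1 : z i0 = c (i0+1) := le_antisymm hr0 (by linarith)
          have hi1eq : i1 = i0 + 1 := by
            by_contra hne2
            have hlt2 : i0 + 1 < i1 := by omega
            have := hc_lt hlt2
            linarith
          have hca : c (i0+1) = a (i0+1) := by simp [hc]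
          have huaj : u (a (i0+1)) = 0 := by rw [← hca, ← heq1]; exact hz03
          have hsub : S ⊆ {i0, i1} := by
            intro i hiS
            obtain ⟨hir, hie⟩ := Finset.mem_filter.mp hiS
            have hilt := Finset.mem_range.mp hir
            by_cases h : i = i0
            · simp [h]
            · obtain ⟨hzi1, hzi2, hzi3⟩ := hzm i hilt
              have hii : i0 < i := lt_of_le_of_ne (S.min'_le i hiS) (Ne.symm h)
              have hzzi : z i = z i0 := hinj _ _ (le_of_lt hzi1) hzi2 (le_of_lt hz01) hz02
                (by rw [← hie, hi0e])
              obtain ⟨⟨hli, hri⟩, _⟩ := hzspec i hilt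
              have hcci : c (i0+1) ≤ c i := hc_le (by omega)
              have hieq : i = i0+1 := by
                by_contra hne3
                have hlt3 : i0 + 1 < i := by omega
                have := hc_lt hlt3
                linarith
              simp [hieq, hi1eq]
          have hcard2 : S.card ≤ 2 := by
            apply le_trans (Finset.card_le_card hsub)
            apply le_trans (Finset.card_insert_le _ _)
            simp
          have h2le : 2 ≤ Polynomial.rootMultiplicity ζ F := by
            have hsin : Real.sin ((d:ℝ)*(a (i0+1) - θb)) = 0 := by
              rw [hdaj (i0+1)]
              exact_mod_cast Real.sin_nat_mul_pi (i0+1)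
            have hpm : p.eval (Real.cos (a (i0+1))) = M ∨ p.eval (Real.cos (a (i0+1))) = -M := by
              have h4 := hua (i0+1)
              rcases Nat.even_or_odd (i0+1) with he | ho
              · left; rw [he.neg_one_pow] at h4; linarith
              · right; rw [ho.neg_one_pow] at h4; linarith
            have h5 := hdouble (a (i0+1)) huaj hsin hpm
            have hζa : ζ = Complex.exp (a (i0+1)*Complex.I) := by rw [hi0e, heq1, hca]
            rw [hζa]
            exact h5
          exact le_trans hcard2 h2le
  have hfinal := Multiset.card_le_card hVle
  have hdeg := Polynomial.card_roots' F
  have hnd := Fpoly_natDegree d p hp M θb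
  rw [hVcard] at hfinal
  rw [← hF] at hnd
  omega

lemma core (d : ℕ) (hd : 1 ≤ d) (p : Polynomial ℝ) (hp : p.natDegree ≤ d)
    (M θb δ : ℝ) (hmaxv : p.eval (Real.cos θb) = M)
    (hub : ∀ θ : ℝ, |p.eval (Real.cos θ)| ≤ M)
    (hδle : |δ| ≤ π / (2*(d:ℝ))) :
    M * Real.cos ((d:ℝ) * δ) ≤ p.eval (Real.cos (θb + δ)) := by
  rcases le_or_gt 0 δ with h | h
  · exact core_nonneg d hd p hp M θb δ hmaxv hub h (le_trans (le_abs_self δ) hδle)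
  · have h1 := core_nonneg d hd p hp M (-θb) (-δ)
      (by rw [Real.cos_neg]; exact hmaxv) hub (by linarith)
      (by rw [abs_of_neg h] at hδle; linarith)
    rw [show -θb + -δ = -(θb+δ) by ring, Real.cos_neg] at h1
    rw [show (d:ℝ) * -δ = -((d:ℝ)*δ) by ring, Real.cos_neg] at h1
    exact h1

lemma key (L d : ℕ) (hd : 1 ≤ d) (hdL : d < L) (q : Polynomial ℝ) (hq : q.natDegree ≤ d)
    (M xb : ℝ) (hxb : xb ∈ Set.Icc (-1:ℝ) 1) (hqxb : q.eval xb = M)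
    (hub : ∀ y ∈ Set.Icc (-1:ℝ) 1, |q.eval y| ≤ M) :
    ∃ ℓ : Fin L, M * Real.cos (π/2 * d / L) ≤ |q.eval (Real.cos (π * (((ℓ:ℕ):ℝ) + 1/2) / L))| := by
  have hLpos : 0 < L := lt_of_le_of_lt (Nat.zero_le d) hdL
  have hLposR : (0:ℝ) < L := by exact_mod_cast hLpos
  have hdposR : (0:ℝ) < d := by exact_mod_cast hd
  have hπ : (0:ℝ) < π := Real.pi_pos
  set θb := Real.arccos xb with hθbdef
  have hcos : Real.cos θb = xb := Real.cos_arccos hxb.1 hxb.2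
  have hθb0 : 0 ≤ θb := Real.arccos_nonneg xb
  have hθbπ : θb ≤ π := Real.arccos_le_pi xb
  have hub' : ∀ θ : ℝ, |q.eval (Real.cos θ)| ≤ M := fun θ =>
    hub _ ⟨Real.neg_one_le_cos θ, Real.cos_le_one θ⟩
  have hM0 : 0 ≤ M := le_trans (abs_nonneg _) (hub xb hxb)
  -- choose the nearest node index
  set r : ℝ := θb * L / π with hrdef
  have hr0 : 0 ≤ r := by positivity
  set n := Nat.floor r with hndef
  set m := min n (L-1) with hmdef
  have hmL : m < L := by omega
  refine ⟨⟨m, hmL⟩, ?_⟩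
  set θℓ : ℝ := π * ((m:ℝ) + 1/2) / L with hθℓdef
  have hθbr : θb = r * π / L := by
    rw [hrdef]; field_simp
  have hnear : |θℓ - θb| ≤ π / (2*L) := by
    rcases lt_or_ge r L with hrL | hrL
    · have hnlt : n < L := by
        rw [hndef]
        exact (Nat.floor_lt hr0).mpr (by exact_mod_cast hrL)
      have hmn : m = n := by omega
      have h1 : (n:ℝ) ≤ r := Nat.floor_le hr0
      have h2 : r < n + 1 := Nat.lt_floor_add_one r
      rw [hθℓdef, hθbr, hmn, abs_le]
      have hπL : (0:ℝ) ≤ π/L := le_of_lt (div_pos hπ hLposR)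
      constructor
      · have hpos : 0 ≤ (π/L) * ((n:ℝ)+1-r) := mul_nonneg hπL (by linarith)
        have heq : (π/L)*((n:ℝ)+1-r) = (π * ((n:ℝ) + 1/2) / L - r * π / L) + π/(2*L) := by
          field_simp
          ring
        linarith [heq ▸ hpos]
      · have hpos : 0 ≤ (π/L) * (r - (n:ℝ)) := mul_nonneg hπL (by linarith)
        have heq : (π/L)*(r - (n:ℝ)) = π/(2*L) - (π * ((n:ℝ) + 1/2) / L - r * π / L) := by
          field_simp
          ring
        linarith [heq ▸ hpos]
    · -- r ≥ L forces θb = π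
      have hπθb : π ≤ θb := by
        rw [hθbr]
        have h1 : (L:ℝ) * π / L ≤ r * π / L := by
          gcongr
        have h2 : (L:ℝ) * π / L = π := by field_simp
        linarith
      have hθbeq : θb = π := le_antisymm hθbπ hπθb
      have hnL : L ≤ n := by
        rw [hndef]
        exact Nat.le_floor (by exact_mod_cast hrL)
      have hmL1 : m = L - 1 := by omega
      have hdiff : θℓ - θb = -(π/(2*L)) := by
        rw [hθℓdef, hθbeq, hmL1]
        have hcast : ((L-1:ℕ):ℝ) = (L:ℝ) - 1 := by
          push_cast [Nat.cast_sub (by omega : 1 ≤ L)]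
          ring
        rw [hcast]
        field_simp
        ring
      rw [hdiff, abs_neg, abs_of_pos (div_pos hπ (by linarith))]
  have hδ : |θℓ - θb| ≤ π/(2*(d:ℝ)) := by
    apply le_trans hnear
    gcongr

  have hcore := core d hd q hq M θb (θℓ - θb) (by rw [hcos]; exact hqxb) hub' hδ
  rw [show θb + (θℓ - θb) = θℓ by ring] at hcore
  have h1 : Real.cos (π/2 * d / L) ≤ Real.cos ((d:ℝ) * (θℓ - θb)) := by
    rw [← Real.cos_abs ((d:ℝ)*(θℓ-θb))]
    apply Real.cos_le_cos_of_nonneg_of_le_pi (abs_nonneg _)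
    · calc π/2 * d / L ≤ π/2 * L / L := by gcongr
        _ = π/2 := by rw [mul_div_assoc, div_self (ne_of_gt hLposR), mul_one]
        _ ≤ π := by linarith
    · rw [abs_mul, _root_.abs_of_nonneg hdposR.le]
      calc (d:ℝ) * |θℓ - θb| ≤ (d:ℝ) * (π/(2*L)) := by gcongr
        _ = π/2 * d / L := by field_simp
  calc M * Real.cos (π/2*(d:ℝ)/L) ≤ M * Real.cos ((d:ℝ)*(θℓ-θb)) :=
        mul_le_mul_of_nonneg_left h1 hM0
    _ ≤ q.eval (Real.cos θℓ) := hcore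
    _ ≤ |q.eval (Real.cos θℓ)| := le_abs_self _

theorem cheb_zeros_discrete_vs_continuous
    (L d : ℕ) (hL : 0 < L) (hdL : d < L)
    (p : Polynomial ℝ) (hp : p.natDegree ≤ d) :
    ∀ x ∈ Set.Icc (-1:ℝ) 1,
      |p.eval x| ≤ (Real.cos (π / 2 * d / L))⁻¹ *
        (Finset.univ.sup' (Finset.univ_nonempty_iff.mpr (Fin.pos_iff_nonempty.mp hL))
          fun ℓ : Fin L => |p.eval (Real.cos (π * ((ℓ : ℕ) + 1/2) / L))|) := by
  intro x hx
  have hπ : (0:ℝ) < π := Real.pi_pos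
  have hLposR : (0:ℝ) < L := by exact_mod_cast hL
  set S := Finset.univ.sup' (Finset.univ_nonempty_iff.mpr (Fin.pos_iff_nonempty.mp hL))
    (fun ℓ : Fin L => |p.eval (Real.cos (π * ((ℓ : ℕ) + 1/2) / L))|) with hS
  have hγpos : 0 < Real.cos (π / 2 * d / L) := by
    apply Real.cos_pos_of_mem_Ioo
    constructor
    · have h0 : 0 ≤ π / 2 * d / L := by positivity
      linarith
    · rw [mul_div_assoc]
      have h1 : (d:ℝ)/L < 1 := (div_lt_one hLposR).mpr (by exact_mod_cast hdL)
      nlinarith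
  rcases Nat.eq_zero_or_pos d with hd0 | hdpos
  · -- degree 0 : p is constant
    subst hd0
    have hpc := Polynomial.eq_C_of_natDegree_le_zero hp
    have hsup : |p.coeff 0| ≤ S := by
      have h := Finset.le_sup'
        (f := fun ℓ : Fin L => |p.eval (Real.cos (π * ((ℓ : ℕ) + 1/2) / L))|)
        (Finset.mem_univ (⟨0, hL⟩ : Fin L))
      rw [← hS] at h
      calc |p.coeff 0| = |p.eval (Real.cos (π * (((0:ℕ):ℝ) + 1/2) / L))| := by
            conv_lhs => rw [show p.coeff 0 = p.eval (Real.cos (π * (((0:ℕ):ℝ) + 1/2) / L)) by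
              conv_rhs => rw [hpc]
              simp]
        _ ≤ S := by simpa using h
    have hx0 : |p.eval x| = |p.coeff 0| := by rw [hpc]; simp
    rw [hx0]
    calc |p.coeff 0| ≤ S := hsup
      _ = (Real.cos (π / 2 * ((0:ℕ):ℝ) / L))⁻¹ * S := by
        rw [show π / 2 * ((0:ℕ):ℝ) / L = 0 by norm_num, Real.cos_zero, inv_one, one_mul]
    
  · -- degree ≥ 1
    obtain ⟨xb, hxbmem, hmaxon⟩ := isCompact_Icc.exists_isMaxOn
      (Set.nonempty_Icc.mpr (by norm_num : (-1:ℝ) ≤ 1))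
      ((p.continuous.abs).continuousOn)
    have hmax' : ∀ y ∈ Set.Icc (-1:ℝ) 1, |p.eval y| ≤ |p.eval xb| := fun y hy => hmaxon hy
    set M := |p.eval xb| with hM
    have hkey : ∃ ℓ : Fin L,
        M * Real.cos (π/2 * d / L) ≤ |p.eval (Real.cos (π * (((ℓ:ℕ):ℝ) + 1/2) / L))| := by
      rcases abs_cases (p.eval xb) with ⟨hq, _⟩ | ⟨hq, _⟩
      · exact key L d hdpos hdL p hp M xb hxbmem hq.symm hmax'
      · obtain ⟨ℓ, hℓ⟩ := key L d hdpos hdL (-p) (by simpa using hp) M xb hxbmem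
          (by simp only [Polynomial.eval_neg]; linarith [hq]) (fun y hy => by simpa using hmax' y hy)
        exact ⟨ℓ, by simpa using hℓ⟩
    obtain ⟨ℓ0, hℓ0⟩ := hkey
    have hsup : |p.eval (Real.cos (π * (((ℓ0:ℕ):ℝ) + 1/2) / L))| ≤ S := by
      have h := Finset.le_sup'
        (f := fun ℓ : Fin L => |p.eval (Real.cos (π * ((ℓ : ℕ) + 1/2) / L))|)
        (Finset.mem_univ ℓ0)
      rw [← hS] at h
      exact h
    have hMx : |p.eval x| ≤ M := hmax' x hx
    have hchain : Real.cos (π/2*d/L) * |p.eval x| ≤ S := by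
      calc Real.cos (π/2*d/L) * |p.eval x| ≤ Real.cos (π/2*d/L) * M := by gcongr
        _ = M * Real.cos (π/2*d/L) := by ring
        _ ≤ S := le_trans hℓ0 hsup
    calc |p.eval x| = (Real.cos (π/2*(d:ℝ)/L))⁻¹ * (Real.cos (π/2*(d:ℝ)/L) * |p.eval x|) := by
          rw [← mul_assoc, inv_mul_cancel₀ (ne_of_gt hγpos), one_mul]
      _ ≤ (Real.cos (π/2*(d:ℝ)/L))⁻¹ * S := by gcongr

end ChebAux
end

section
/- For any even integer a > 0 and any odd integer b > 0, the map P : C[-1,1] → C[-1,1] defined by P(f)(x) = (1/2)f(-1)x^a(1-x^b) + f(0)(1-x^a) + (1/2)f(1)x^a(1+x^b) is a projection onto the subspace span{1, x^a, x^{a+b}} with operator norm ‖P‖_{∞→∞} = 1. -/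
/-- The monomial `x ↦ x^n` as an element of `C[-1,1]`. -/
def monomialCM (n : ℕ) : C(Set.Icc (-1:ℝ) 1, ℝ) :=
  ⟨fun x => (x : ℝ) ^ n, (continuous_subtype_val.pow n)⟩

noncomputable def Pproj (a b : ℕ) : C(Set.Icc (-1:ℝ) 1, ℝ) →L[ℝ] C(Set.Icc (-1:ℝ) 1, ℝ) :=
  (ContinuousMap.evalCLM ℝ (⟨-1, by norm_num⟩ : Set.Icc (-1:ℝ) 1)).smulRight
      ((1/2 : ℝ) • (monomialCM a - monomialCM (a+b)))
  + (ContinuousMap.evalCLM ℝ (⟨0, by norm_num⟩ : Set.Icc (-1:ℝ) 1)).smulRight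
      (monomialCM 0 - monomialCM a)
  + (ContinuousMap.evalCLM ℝ (⟨1, by norm_num⟩ : Set.Icc (-1:ℝ) 1)).smulRight
      ((1/2 : ℝ) • (monomialCM a + monomialCM (a+b)))

lemma Pproj_apply (a b : ℕ) (f : C(Set.Icc (-1:ℝ) 1, ℝ)) (x : Set.Icc (-1:ℝ) 1) :
    Pproj a b f x = (1/2 : ℝ) * f ⟨-1, by norm_num⟩ * (x : ℝ) ^ a * (1 - (x : ℝ) ^ b)
      + f ⟨0, by norm_num⟩ * (1 - (x : ℝ) ^ a)
      + (1/2 : ℝ) * f ⟨1, by norm_num⟩ * (x : ℝ) ^ a * (1 + (x : ℝ) ^ b) := by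
  simp [Pproj, monomialCM, ContinuousMap.evalCLM, smul_eq_mul, pow_add]
  ring

theorem interpolating_projection_norm_one
    (a b : ℕ) (ha : 0 < a) (hae : Even a) (hb : 0 < b) (hbo : Odd b) :
    ∃ P : C(Set.Icc (-1:ℝ) 1, ℝ) →L[ℝ] C(Set.Icc (-1:ℝ) 1, ℝ),
      (∀ f (x : Set.Icc (-1:ℝ) 1),
        P f x = (1/2 : ℝ) * f ⟨-1, by norm_num⟩ * (x : ℝ) ^ a * (1 - (x : ℝ) ^ b)
          + f ⟨0, by norm_num⟩ * (1 - (x : ℝ) ^ a)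
          + (1/2 : ℝ) * f ⟨1, by norm_num⟩ * (x : ℝ) ^ a * (1 + (x : ℝ) ^ b)) ∧
      (∀ w ∈ Submodule.span ℝ {monomialCM 0, monomialCM a, monomialCM (a + b)}, P w = w) ∧
      LinearMap.range (P : C(Set.Icc (-1:ℝ) 1, ℝ) →ₗ[ℝ] C(Set.Icc (-1:ℝ) 1, ℝ)) =
        Submodule.span ℝ {monomialCM 0, monomialCM a, monomialCM (a + b)} ∧
      ‖P‖ = 1 := by
  have hfix : ∀ w ∈ Submodule.span ℝ
      ({monomialCM 0, monomialCM a, monomialCM (a + b)} :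
        Set C(Set.Icc (-1:ℝ) 1, ℝ)), Pproj a b w = w := by
    intro w hw
    induction hw using Submodule.span_induction with
    | mem w hw =>
      rcases hw with h | h | h <;> subst h <;>
      · ext x
        rw [Pproj_apply]
        simp only [monomialCM, ContinuousMap.coe_mk]
        have h1 : ((-1 : ℝ)) ^ a = 1 := hae.neg_one_pow
        have h2 : ((-1 : ℝ)) ^ (a + b) = -1 := by
          rw [pow_add, h1, hbo.neg_one_pow]; ring
        have h3 : (0 : ℝ) ^ a = 0 := zero_pow ha.ne'
        have h4 : (0 : ℝ) ^ (a + b) = 0 := zero_pow (by omega)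
        simp only [h1, h2, h3, h4, pow_add, one_pow, pow_zero]
        ring
    | zero => simp
    | add u v _ _ hu hv => simp [hu, hv]
    | smul c u _ hu => simp [hu]
  have hbound : ∀ f : C(Set.Icc (-1:ℝ) 1, ℝ), ‖Pproj a b f‖ ≤ ‖f‖ := by
    intro f
    apply ContinuousMap.norm_le _ (norm_nonneg f) |>.mpr
    intro x
    rw [Pproj_apply]
    have hx1 : -1 ≤ (x : ℝ) := x.2.1
    have hx2 : (x : ℝ) ≤ 1 := x.2.2
    have hxa : 0 ≤ (x : ℝ) ^ a := hae.pow_nonneg _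
    have hxa1 : (x : ℝ) ^ a ≤ 1 := by
      calc (x : ℝ) ^ a ≤ |(x : ℝ) ^ a| := le_abs_self _
        _ = |(x : ℝ)| ^ a := abs_pow _ _
        _ ≤ 1 := pow_le_one₀ (abs_nonneg _) (abs_le.mpr ⟨hx1, hx2⟩)
    have hxb : |(x : ℝ) ^ b| ≤ 1 := by
      rw [abs_pow]; exact pow_le_one₀ (abs_nonneg _) (abs_le.mpr ⟨hx1, hx2⟩)
    rw [abs_le] at hxb
    have hf1 : |f ⟨-1, by norm_num⟩| ≤ ‖f‖ := f.norm_coe_le_norm _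
    have hf2 : |f ⟨0, by norm_num⟩| ≤ ‖f‖ := f.norm_coe_le_norm _
    have hf3 : |f ⟨1, by norm_num⟩| ≤ ‖f‖ := f.norm_coe_le_norm _
    rw [abs_le] at hf1 hf2 hf3
    rw [Real.norm_eq_abs, abs_le]
    constructor <;> nlinarith [hxb.1, hxb.2, hf1.1, hf1.2, hf2.1, hf2.2, hf3.1, hf3.2,
      mul_nonneg hxa (by linarith : (0:ℝ) ≤ 1 - (x:ℝ)^b),
      mul_nonneg hxa (by linarith : (0:ℝ) ≤ 1 + (x:ℝ)^b)]
  refine ⟨Pproj a b, Pproj_apply a b, hfix, ?_, ?_⟩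
  · -- range
    apply le_antisymm
    · rintro g ⟨f, rfl⟩
      have hm : ∀ n ∈ ({monomialCM 0, monomialCM a, monomialCM (a + b)} :
          Set C(Set.Icc (-1:ℝ) 1, ℝ)), n ∈ Submodule.span ℝ
          {monomialCM 0, monomialCM a, monomialCM (a + b)} := fun n hn =>
        Submodule.subset_span hn
      show Pproj a b f ∈ _
      unfold Pproj
      simp only [ContinuousLinearMap.add_apply, ContinuousLinearMap.smulRight_apply]
      refine Submodule.add_mem _ (Submodule.add_mem _ ?_ ?_) ?_ <;>
        refine Submodule.smul_mem _ _ ?_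
      · exact Submodule.smul_mem _ _ (Submodule.sub_mem _
          (hm _ (by simp)) (hm _ (by simp)))
      · exact Submodule.sub_mem _ (hm _ (by simp)) (hm _ (by simp))
      · exact Submodule.smul_mem _ _ (Submodule.add_mem _
          (hm _ (by simp)) (hm _ (by simp)))
    · intro w hw
      exact ⟨w, hfix w hw⟩
  · -- norm
    apply le_antisymm
    · exact ContinuousLinearMap.opNorm_le_bound _ (by norm_num)
        (fun f => by simpa using hbound f)
    · have h1 : Pproj a b (monomialCM 0) = monomialCM 0 :=
        hfix _ (Submodule.subset_span (by simp))
      have hn : ‖monomialCM 0‖ = 1 := by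
        have : (monomialCM 0 : C(Set.Icc (-1:ℝ) 1, ℝ)) = 1 := by
          ext x; simp [monomialCM]
        rw [this]
        haveI : Nonempty (Set.Icc (-1:ℝ) 1) := ⟨⟨0, by norm_num⟩⟩
        exact norm_one
      calc (1 : ℝ) = ‖Pproj a b (monomialCM 0)‖ := by rw [h1, hn]
        _ ≤ ‖Pproj a b‖ * ‖monomialCM 0‖ := (Pproj a b).le_opNorm _
        _ = ‖Pproj a b‖ := by rw [hn, mul_one]
end
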